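/- Let G1=(V1,E1,ℓ1), G2=(V2,E2,ℓ2), G3=(V3,E3,ℓ3) be labeled graphs with single-character vertex labels, let v1∈V1, v2∈V2, v3∈V3, and suppose S_IC(v1,v2,v3) ≠ ∅. If there exist a character c, a cycle in G1 through v1 containing a vertex labeled c, and a cycle in G2 through v2 containing a vertex labeled c, then for every n∈ℕ there exists z ∈ S_IC(v1,v2,v3) with |z| ≥ n (so S_IC(v1,v2,v3) contains strings of arbitrarily large length). -/

import Mathlib

/-!
A cycle through `v` can be appended to a path ending at `v` as often as we like, and the result
still ends at `v`. Pumping the two cycles through `v1` and `v2` `n` times therefore turns a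
witness `z ∈ S_IC(v1,v2,v3)` into the common subsequence `z ++ cⁿ`, and since `z` is a
subsequence of `z ++ cⁿ`, the left-maximal path of `G3` below `z` still lies below it.
-/

open List Relation

section Defs

variable {V V1 V2 V3 α : Type*}

/-- A (directed) path: a nonempty list of vertices, consecutive ones joined by edges. -/
def IsPath (E : V → V → Prop) (p : List V) : Prop :=
  p ≠ [] ∧ p.Chain' E

/-- Paths ending at `v` (the set `P(v)`). -/
def EndsAt (E : V → V → Prop) (v : V) (p : List V) : Prop :=
  IsPath E p ∧ p.getLast? = some v

/-- A path is left-maximal if its first vertex has no in-coming edges. -/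
def LeftMax (E : V → V → Prop) (p : List V) : Prop :=
  ∀ w u, p.head? = some w → ¬ E u w

/-- A path is right-maximal if its last vertex has no out-going edges. -/
def RightMax (E : V → V → Prop) (p : List V) : Prop :=
  ∀ w u, p.getLast? = some w → ¬ E w u

/-- `Subseq(ℓ(P(v)))`: subsequences of label strings of paths ending at `v`. -/
def SubseqAt (E : V → V → Prop) (ℓ : V → α) (v : V) : Set (List α) :=
  {z | ∃ p, EndsAt E v p ∧ z.Sublist (p.map ℓ)}

/-- `Subseq(ℓ(LMP(v)))`: subsequences of label strings of left-maximal paths ending at `v`. -/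
def SubseqLM (E : V → V → Prop) (ℓ : V → α) (v : V) : Set (List α) :=
  {z | ∃ p, EndsAt E v p ∧ LeftMax E p ∧ z.Sublist (p.map ℓ)}

/-- `Subseq(G)`: subsequences of label strings of all paths of `G`. -/
def SubseqG (E : V → V → Prop) (ℓ : V → α) : Set (List α) :=
  {z | ∃ p, IsPath E p ∧ z.Sublist (p.map ℓ)}

/-- A graph is acyclic if no vertex lies on a nonempty cycle. -/
def Acyclic (E : V → V → Prop) : Prop :=
  ∀ v, ¬ Relation.TransGen E v v

/-- The set `S_IC(v1,v2,v3)`. -/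
def SIC (E1 : V1 → V1 → Prop) (ℓ1 : V1 → α) (E2 : V2 → V2 → Prop) (ℓ2 : V2 → α)
    (E3 : V3 → V3 → Prop) (ℓ3 : V3 → α) (v1 : V1) (v2 : V2) (v3 : V3) :
    Set (List α) :=
  {z | (∃ q, EndsAt E3 v3 q ∧ LeftMax E3 q ∧ (q.map ℓ3).Sublist z) ∧
       z ∈ SubseqAt E1 ℓ1 v1 ∧ z ∈ SubseqAt E2 ℓ2 v2}

/-- Maximum length of a string in `S`, with `⊥` (= −∞) for `S = ∅`. -/
noncomputable def maxLen (S : Set (List α)) : WithBot ℕ :=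
  sSup ((fun z : List α => (z.length : WithBot ℕ)) '' S)

/-- `L(v1,v2)`: the maximum length of a common subsequence (as a natural number). -/
noncomputable def Lval (E1 : V1 → V1 → Prop) (ℓ1 : V1 → α)
    (E2 : V2 → V2 → Prop) (ℓ2 : V2 → α) (v1 : V1) (v2 : V2) : ℕ :=
  sSup {n | ∃ z ∈ SubseqAt E1 ℓ1 v1 ∩ SubseqAt E2 ℓ2 v2, n = z.length}

/-- `D(v1,v2,v3)`: the maximum length of a string in `S_IC(v1,v2,v3)`, `−∞` if empty. -/
noncomputable def Dval (E1 : V1 → V1 → Prop) (ℓ1 : V1 → α) (E2 : V2 → V2 → Prop) (ℓ2 : V2 → α)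
    (E3 : V3 → V3 → Prop) (ℓ3 : V3 → α) (v1 : V1) (v2 : V2) (v3 : V3) : WithBot ℕ :=
  maxLen (SIC E1 ℓ1 E2 ℓ2 E3 ℓ3 v1 v2 v3)

end Defs

open List

section Pumping

variable {V α : Type*} {E : V → V → Prop} {ℓ : V → α} {v : V}

theorem EndsAt.append_loop {p t : List V} (hp : EndsAt E v p) (ht : (v :: t).IsChain E)
    (htv : t.getLast? = some v) : EndsAt E v (p ++ t) := by
  obtain ⟨⟨hp_ne, hp_chain⟩, hpv⟩ := hp
  have ht_ne : t ≠ [] := by rintro rfl; simp at htv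
  refine ⟨⟨by simp [hp_ne], ?_⟩, by rwa [getLast?_append_of_ne_nil _ ht_ne]⟩
  obtain ⟨hv_head, ht_chain⟩ := isChain_cons.mp ht
  exact hp_chain.append ht_chain (by simpa [hpv] using hv_head)

theorem exists_loop_of_cycle {c : α} {cyc : List V} (hchain : cyc.IsChain E)
    (hlen : 2 ≤ cyc.length) (hhead : cyc.head? = some v) (hlast : cyc.getLast? = some v)
    (hc : ∃ w ∈ cyc, ℓ w = c) :
    ∃ t : List V, (v :: t).IsChain E ∧ t.getLast? = some v ∧ c ∈ t.map ℓ := by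
  obtain _ | ⟨x, _ | ⟨y, rest⟩⟩ := cyc
  · simp at hlen
  · simp at hlen
  obtain rfl : x = v := by simpa using hhead
  have hlast' : (y :: rest).getLast? = some x := by rwa [getLast?_cons_cons] at hlast
  refine ⟨y :: rest, hchain, hlast', ?_⟩
  obtain ⟨w, hw, rfl⟩ := hc
  -- dropping the first vertex of the cycle loses no label: it reappears as the last vertex
  rcases mem_cons.mp hw with rfl | hw
  · exact mem_map_of_mem (mem_of_getLast? hlast')
  · exact mem_map_of_mem hw

theorem append_replicate_mem_subseqAt {c : α} {t : List V} (ht : (v :: t).IsChain E)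
    (htv : t.getLast? = some v) (hct : c ∈ t.map ℓ) {z : List α} (hz : z ∈ SubseqAt E ℓ v)
    (n : ℕ) : z ++ replicate n c ∈ SubseqAt E ℓ v := by
  induction n with
  | zero => simpa using hz
  | succ n ih =>
    obtain ⟨p, hp, hsub⟩ := ih
    refine ⟨p ++ t, hp.append_loop ht htv, ?_⟩
    rw [replicate_succ', ← append_assoc, map_append]
    exact hsub.append (singleton_sublist.mpr hct)

end Pumping

theorem stmt17 {V1 V2 V3 α : Type*}
    (E1 : V1 → V1 → Prop) (ℓ1 : V1 → α) (E2 : V2 → V2 → Prop) (ℓ2 : V2 → α)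
    (E3 : V3 → V3 → Prop) (ℓ3 : V3 → α) (v1 : V1) (v2 : V2) (v3 : V3)
    (hne : (SIC E1 ℓ1 E2 ℓ2 E3 ℓ3 v1 v2 v3).Nonempty)
    (c : α)
    (hc1 : ∃ p : List V1, p.Chain' E1 ∧ 2 ≤ p.length ∧
      p.head? = some v1 ∧ p.getLast? = some v1 ∧ ∃ w ∈ p, ℓ1 w = c)
    (hc2 : ∃ p : List V2, p.Chain' E2 ∧ 2 ≤ p.length ∧
      p.head? = some v2 ∧ p.getLast? = some v2 ∧ ∃ w ∈ p, ℓ2 w = c) :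
    ∀ n : ℕ, ∃ z ∈ SIC E1 ℓ1 E2 ℓ2 E3 ℓ3 v1 v2 v3, n ≤ z.length := by
  intro n
  obtain ⟨z, ⟨q, hq, hq_left, hq_sub⟩, hz1, hz2⟩ := hne
  obtain ⟨_, hchain1, hlen1, hhead1, hlast1, hlabel1⟩ := hc1
  obtain ⟨_, hchain2, hlen2, hhead2, hlast2, hlabel2⟩ := hc2
  obtain ⟨t1, ht1, ht1v, hct1⟩ := exists_loop_of_cycle hchain1 hlen1 hhead1 hlast1 hlabel1
  obtain ⟨t2, ht2, ht2v, hct2⟩ := exists_loop_of_cycle hchain2 hlen2 hhead2 hlast2 hlabel2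
  refine ⟨z ++ replicate n c, ⟨⟨q, hq, hq_left, hq_sub.trans (sublist_append_left _ _)⟩,
    append_replicate_mem_subseqAt ht1 ht1v hct1 hz1 n,
    append_replicate_mem_subseqAt ht2 ht2v hct2 hz2 n⟩, by simp⟩
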